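/- arXiv:1405.1945 — 2 statements merged into one kernel-verified Lean document; each statement's English description precedes it below -/
import Mathlib

section
/- There exists a unit vector z ∈ ℂ^{2^n} ⊗ ℂ^{2^n} such that (A_i ⊗ A_i) z = z for all i = 1,...,n, where A_i are the anticommuting self-adjoint matrices built from Pauli matrices as A_k = σ_z^{⊗(k−1)} ⊗ σ_x ⊗ I^{⊗(n−k)}. -/
/-! The maximally entangled vector `z = vec 1 / √(2^n)` works. Since
`(A ⊗ₖ A) *ᵥ vec X = vec (A * X * Aᵀ)`, it is fixed by `A ⊗ₖ A` as soon as `A * Aᵀ = 1`, and each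
`A_k` is a tensor product of the real orthogonal matrices `σ_z`, `σ_x`, `1`, hence is itself real
orthogonal. -/

open scoped Matrix Kronecker BigOperators

def pauliX : Matrix (Fin 2) (Fin 2) ℂ := !![0, 1; 1, 0]

def pauliZ : Matrix (Fin 2) (Fin 2) ℂ := !![1, 0; 0, -1]

noncomputable def pauliOp (n : ℕ) (k : Fin n) :
    Matrix (Fin n → Fin 2) (Fin n → Fin 2) ℂ :=
  Matrix.of fun f g => ∏ j : Fin n,
    (if j < k then pauliZ else if j = k then pauliX else 1) (f j) (g j)

namespace Matrix

variable {ι l m n R : Type*} [Fintype ι] [CommSemiring R]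

def piKronecker (M : ι → Matrix m n R) : Matrix (ι → m) (ι → n) R :=
  of fun f g => ∏ j, M j (f j) (g j)

theorem piKronecker_apply (M : ι → Matrix m n R) (f : ι → m) (g : ι → n) :
    piKronecker M f g = ∏ j, M j (f j) (g j) := rfl

theorem piKronecker_mul [DecidableEq ι] [Fintype m] (M : ι → Matrix l m R)
    (N : ι → Matrix m n R) : piKronecker M * piKronecker N = piKronecker fun j => M j * N j := by
  ext f g
  simp only [mul_apply, piKronecker_apply, Finset.prod_univ_sum, Fintype.piFinset_univ,
    Finset.prod_mul_distrib]

theorem piKronecker_transpose (M : ι → Matrix m n R) :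
    (piKronecker M)ᵀ = piKronecker fun j => (M j)ᵀ := rfl

theorem piKronecker_one [DecidableEq m] : piKronecker (fun _ : ι => (1 : Matrix m m R)) = 1 := by
  ext f g
  simp only [piKronecker_apply, one_apply, Finset.prod_ite_zero, Finset.prod_const_one,
    Finset.mem_univ, forall_const, funext_iff]

theorem piKronecker_mul_transpose_eq_one [DecidableEq ι] [Fintype m] [DecidableEq m]
    {M : ι → Matrix m m R} (hM : ∀ j, M j * (M j)ᵀ = 1) :
    piKronecker M * (piKronecker M)ᵀ = 1 := by
  rw [piKronecker_transpose, piKronecker_mul, funext hM, piKronecker_one]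

theorem kronecker_self_mulVec_vec_one [Fintype m] [DecidableEq m] {A : Matrix m m R}
    (hA : A * Aᵀ = 1) : (A ⊗ₖ A) *ᵥ vec 1 = vec (1 : Matrix m m R) := by
  rw [kronecker_mulVec_vec, Matrix.mul_one, hA]

theorem sum_norm_sq_vec_one {𝕜 : Type*} [NormedRing 𝕜] [NormOneClass 𝕜] [Fintype m]
    [DecidableEq m] :
    ∑ p, ‖vec (1 : Matrix m m 𝕜) p‖ ^ 2 = Fintype.card m := by
  rw [Fintype.sum_prod_type]
  simp [one_apply, apply_ite]

theorem exists_unit_vec_fixed_by_kronecker_self {κ 𝕜 : Type*} [RCLike 𝕜] [Fintype m]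
    [DecidableEq m] [Nonempty m] (A : κ → Matrix m m 𝕜) (hA : ∀ i, A i * (A i)ᵀ = 1) :
    ∃ z : m × m → 𝕜, Real.sqrt (∑ p, ‖z p‖ ^ 2) = 1 ∧ ∀ i, (A i ⊗ₖ A i) *ᵥ z = z := by
  set c : ℝ := (Real.sqrt (Fintype.card m))⁻¹
  have hc : c ^ 2 * Fintype.card m = 1 := by
    rw [inv_pow, Real.sq_sqrt (Nat.cast_nonneg _), inv_mul_cancel₀ (by positivity)]
  refine ⟨(c : 𝕜) • vec 1, ?_, fun i => ?_⟩
  · simp only [Pi.smul_apply, norm_smul, mul_pow, ← Finset.mul_sum, sum_norm_sq_vec_one,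
      RCLike.norm_ofReal, sq_abs, hc, Real.sqrt_one]
  · rw [mulVec_smul, kronecker_self_mulVec_vec_one (hA i)]

end Matrix

open Matrix

theorem pauliX_mul_transpose : pauliX * pauliXᵀ = 1 := by
  simp [pauliX, ← ext_iff, Fin.forall_fin_two, vecMul, dotProduct]

theorem pauliZ_mul_transpose : pauliZ * pauliZᵀ = 1 := by
  simp [pauliZ, ← ext_iff, Fin.forall_fin_two, vecMul, dotProduct]

theorem pauliOp_mul_transpose (n : ℕ) (k : Fin n) : pauliOp n k * (pauliOp n k)ᵀ = 1 := by
  refine piKronecker_mul_transpose_eq_one fun j => ?_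
  split_ifs
  exacts [pauliZ_mul_transpose, pauliX_mul_transpose, by simp]

/-- There exists a unit vector `z ∈ ℂ^{2^n} ⊗ ℂ^{2^n}` with `(A_i ⊗ A_i) z = z` for every `i`,
where `A_i = pauliOp n i` are the anticommuting self-adjoint matrices built from the Pauli
matrices. The vector is realized in `ℂ^{2^n × 2^n}` and `A_i ⊗ A_i` acts by `mulVec` via the
Kronecker product; the norm is the Euclidean one. -/
theorem stmt4 (n : ℕ) :
    ∃ z : ((Fin n → Fin 2) × (Fin n → Fin 2)) → ℂ,
      Real.sqrt (∑ p, ‖z p‖ ^ 2) = 1 ∧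
      ∀ i : Fin n, (pauliOp n i ⊗ₖ pauliOp n i).mulVec z = z :=
  exists_unit_vec_fixed_by_kronecker_self _ (pauliOp_mul_transpose n)
end

section
/- For any matrices b_x, c_x ∈ M_n(ℂ), x = 1,...,N, and unitaries U_x ∈ M_m(ℂ), ‖Σ_x U_x ⊗ b_x c_x‖_{M_m ⊗ M_n} ≤ ‖Σ_x b_x b_x*‖^{1/2} · ‖Σ_x c_x* c_x‖^{1/2}. -/
open scoped Matrix Kronecker BigOperators

noncomputable def opNorm {ι : Type*} [Fintype ι] [DecidableEq ι] (A : Matrix ι ι ℂ) : ℝ :=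
  ‖Matrix.toEuclideanCLM (𝕜 := ℂ) A‖

/-!
Writing `U_x ⊗ b_x c_x = (U_x ⊗ b_x)(1 ⊗ c_x)`, the left side is `‖∑ T_x S_x‖` in the C⋆-algebra
`M_{mn}(ℂ)`, which is bounded by `‖∑ T_x T_x*‖^{1/2} ‖∑ S_x* S_x‖^{1/2}` (Cauchy–Schwarz in the
Hilbert C⋆-module `M_{mn}(ℂ)^N`). Unitarity of `U_x` turns both sums into `1 ⊗ (·)` of the sums in the
statement, and `D ↦ 1 ⊗ D` is a ⋆-homomorphism, hence contractive.
-/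

namespace Matrix

variable (m : Type*) {n R : Type*} [Fintype m] [DecidableEq m] [Fintype n] [DecidableEq n]
  [CommSemiring R] [StarRing R]

@[simps]
def oneKroneckerStarAlgHom : Matrix n n R →⋆ₐ[R] Matrix (m × n) (m × n) R where
  toFun D := 1 ⊗ₖ D
  map_one' := one_kronecker_one
  map_mul' A B := by rw [← mul_kronecker_mul, one_mul]
  map_zero' := kronecker_zero _
  map_add' := kronecker_add _
  commutes' r := by
    simp only [Algebra.algebraMap_eq_smul_one, kronecker_smul, one_kronecker_one]
  map_star' D := by
    simp only [star_eq_conjTranspose, conjTranspose_kronecker, conjTranspose_one]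

end Matrix

theorem norm_sum_mul_le_sqrt_mul_sqrt {A ι : Type*} [NonUnitalCStarAlgebra A] [Fintype ι]
    (a b : ι → A) :
    ‖∑ i, a i * b i‖ ≤ √‖∑ i, a i * star (a i)‖ * √‖∑ i, star (b i) * b i‖ := by
  -- the C⋆-module structure on `ι → A` needs an order on `A`; take the spectral one
  let _ := CStarAlgebra.spectralOrder A
  have := CStarAlgebra.spectralOrderedRing A
  have := CStarModule.norm_inner_le (A := A) (WithCStarModule A (ι → A))
    (x := (WithCStarModule.equiv A _).symm (star b)) (y := (WithCStarModule.equiv A _).symm a)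
  simpa only [WithCStarModule.pi_inner, WithCStarModule.pi_norm, WithCStarModule.inner_def,
    WithCStarModule.equiv_symm_pi_apply, Pi.star_apply, star_star, mul_comm] using this

open scoped Matrix.Norms.L2Operator

/-- For any matrices `b_x, c_x ∈ M_n(ℂ)` and unitaries `U_x ∈ M_m(ℂ)`,
`‖∑ x, U_x ⊗ (b_x c_x)‖ ≤ ‖∑ x, b_x b_x*‖^(1/2) · ‖∑ x, c_x* c_x‖^(1/2)`. -/
theorem stmt16 (n m N : ℕ) (b c : Fin N → Matrix (Fin n) (Fin n) ℂ)
    (U : Fin N → Matrix (Fin m) (Fin m) ℂ)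
    (hU : ∀ x, U x ∈ Matrix.unitaryGroup (Fin m) ℂ) :
    opNorm (∑ x, U x ⊗ₖ (b x * c x)) ≤
      Real.sqrt (opNorm (∑ x, b x * (b x)ᴴ)) * Real.sqrt (opNorm (∑ x, (c x)ᴴ * c x)) := by
  let φ := Matrix.oneKroneckerStarAlgHom (R := ℂ) (n := Fin n) (Fin m)
  have hsplit : ∑ x, U x ⊗ₖ (b x * c x) = ∑ x, (U x ⊗ₖ b x) * φ (c x) := by
    simp only [φ, Matrix.oneKroneckerStarAlgHom_apply, ← Matrix.mul_kronecker_mul, mul_one]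
  have hT : ∑ x, (U x ⊗ₖ b x) * star (U x ⊗ₖ b x) = φ (∑ x, b x * (b x)ᴴ) := by
    rw [map_sum]
    refine Finset.sum_congr rfl fun x _ ↦ ?_
    rw [Matrix.star_eq_conjTranspose, Matrix.conjTranspose_kronecker, ← Matrix.mul_kronecker_mul,
      ← Matrix.star_eq_conjTranspose, Matrix.mem_unitaryGroup_iff.mp (hU x)]
    rfl
  have hS : ∑ x, star (φ (c x)) * φ (c x) = φ (∑ x, (c x)ᴴ * c x) := by
    simp only [← map_star, Matrix.star_eq_conjTranspose, ← map_mul, map_sum]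
  calc opNorm (∑ x, U x ⊗ₖ (b x * c x)) = ‖∑ x, (U x ⊗ₖ b x) * φ (c x)‖ := by rw [hsplit]; rfl
    _ ≤ √‖φ (∑ x, b x * (b x)ᴴ)‖ * √‖φ (∑ x, (c x)ᴴ * c x)‖ := by
      rw [← hT, ← hS]
      exact norm_sum_mul_le_sqrt_mul_sqrt _ _
    _ ≤ √(opNorm (∑ x, b x * (b x)ᴴ)) * √(opNorm (∑ x, (c x)ᴴ * c x)) := by
      gcongr <;> exact NonUnitalStarAlgHom.norm_apply_le φ _
end
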